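/- arXiv:math-ph/0605034 — 6 statements merged into one kernel-verified Lean document; each statement's English description precedes it below -/
import Mathlib

section
/- For complex numbers z = x + iy and w = u + iv with x, u ≥ 0, setting a = (y − v)² + x² + u² and b = −2xu and w* = −u + iv, we have 2(a + √(a² − b²)) = (|z − w| + |z − w*|)². -/
/-! With `p = ‖z - w‖` and `q = ‖z - w*‖` one has `2a = p² + q²` and `2b = p² - q²`, so
`a² - b² = (pq)²` and `2(a + √(a² - b²)) = p² + q² + 2pq`. -/

open Complex

theorem Complex.sq_norm_mk_sub_mk (x y u v : ℝ) :
    ‖(⟨x, y⟩ : ℂ) - ⟨u, v⟩‖ ^ 2 = (x - u) ^ 2 + (y - v) ^ 2 := by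
  rw [Complex.sq_norm, Complex.normSq_apply]
  simp only [Complex.sub_re, Complex.sub_im]
  ring

theorem two_mul_add_sqrt_sq_sub_sq {p q a b : ℝ} (hp : 0 ≤ p) (hq : 0 ≤ q)
    (ha : 2 * a = p ^ 2 + q ^ 2) (hb : 2 * b = p ^ 2 - q ^ 2) :
    2 * (a + √(a ^ 2 - b ^ 2)) = (p + q) ^ 2 := by
  have hsq : a ^ 2 - b ^ 2 = (p * q) ^ 2 := by
    linear_combination ((a + (p ^ 2 + q ^ 2) / 2) * ha - (b + (p ^ 2 - q ^ 2) / 2) * hb) / 2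
  rw [hsq, Real.sqrt_sq (mul_nonneg hp hq)]
  linear_combination ha

theorem sum_dist_sq_identity_general (x y u v : ℝ) :
    let z : ℂ := ⟨x, y⟩
    let w : ℂ := ⟨u, v⟩
    let wstar : ℂ := ⟨-u, v⟩
    let a : ℝ := (y - v) ^ 2 + x ^ 2 + u ^ 2
    let b : ℝ := -2 * x * u
    2 * (a + Real.sqrt (a ^ 2 - b ^ 2))
      = (‖z - w‖ + ‖z - wstar‖) ^ 2 := by
  intro z w wstar a b
  have hw := Complex.sq_norm_mk_sub_mk x y u v
  have hwstar := Complex.sq_norm_mk_sub_mk x y (-u) v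
  refine two_mul_add_sqrt_sq_sub_sq (norm_nonneg _) (norm_nonneg _) ?_ ?_
  · rw [hw, hwstar]; ring
  · rw [hw, hwstar]; ring

theorem sum_dist_sq_identity (x y u v : ℝ) (hx : 0 ≤ x) (hu : 0 ≤ u) :
    let z : ℂ := ⟨x, y⟩
    let w : ℂ := ⟨u, v⟩
    let wstar : ℂ := ⟨-u, v⟩
    let a : ℝ := (y - v) ^ 2 + x ^ 2 + u ^ 2
    let b : ℝ := -2 * x * u
    2 * (a + Real.sqrt (a ^ 2 - b ^ 2))
      = (‖z - w‖ + ‖z - wstar‖) ^ 2 :=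
  sum_dist_sq_identity_general x y u v
end

section
/- For z, w in the right half-plane H⁺ = {z ∈ ℂ : Re z ≥ 0}, the averaged logarithmic kernel K(z,w) := (1/(2π)) ∫₀^{2π} log(1/|σ_t(z) − w|) dt, where σ_t rotates (x,y,0) about the y-axis by angle t (so |σ_t(z) − w|² = x² + u² + (y−v)² − 2xu cos t with z = x+iy, w = u+iv), satisfies K(z,w) = log(2/(|z − w| + |z − w*|)), with w* = −conj(w), whenever (z,w) is not a pair of equal points on the imaginary axis. -/
/-!
Put `r = |z - w|`, `s = |z - w*|`, `p = (r + s)/2` and `q = (s - r)/2`. Then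
`p² + q² = x² + u² + (y - v)²` and `pq = xu`, so the integrand is `-log |p e^{it} - q|` with
`|q| ≤ p`. By the mean value property of `log |· - q|` (harmonic off `q`, with an integrable
singularity on the circle when `|q| = p`), its average over the circle of radius `p` is `log p`,
and `log (1/p) = log (2/(r + s))`.
-/

open Real Complex

theorem norm_circleMap_zero_sub_ofReal_sq (p q t : ℝ) :
    ‖circleMap 0 p t - q‖ ^ 2 = p ^ 2 + q ^ 2 - 2 * p * q * Real.cos t := by
  rw [Complex.sq_norm, Complex.normSq_apply, sub_re, sub_im, circleMap_zero_re, circleMap_zero_im,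
    ofReal_re, ofReal_im]
  linear_combination p ^ 2 * Real.sin_sq_add_cos_sq t

theorem average_log_inv_sqrt_sub_mul_cos {p q : ℝ} (hqp : |q| ≤ |p|) :
    (1 / (2 * π)) * ∫ t in (0:ℝ)..(2 * π),
        Real.log (1 / Real.sqrt (p ^ 2 + q ^ 2 - 2 * p * q * Real.cos t)) = -Real.log p := by
  have hq : (q : ℂ) ∈ Metric.closedBall 0 |p| := by simpa using hqp
  have hintegrand : ∀ t : ℝ, Real.log (1 / Real.sqrt (p ^ 2 + q ^ 2 - 2 * p * q * Real.cos t))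
      = -Real.log ‖circleMap 0 p t - q‖ := fun t => by
    rw [← norm_circleMap_zero_sub_ofReal_sq, Real.sqrt_sq (norm_nonneg _), one_div, Real.log_inv]
  rw [intervalIntegral.integral_congr fun t _ => hintegrand t, intervalIntegral.integral_neg,
    mul_neg, one_div, ← smul_eq_mul, ← circleAverage_def (f := fun ζ => Real.log ‖ζ - q‖),
    circleAverage_log_norm_sub_const_of_mem_closedBall hq]

theorem averaged_log_kernel_eq_general (z w : ℂ) :
    (1 / (2 * π)) * ∫ t in (0:ℝ)..(2 * π),
        Real.log (1 / Real.sqrt (z.re ^ 2 + w.re ^ 2 + (z.im - w.im) ^ 2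
          - 2 * z.re * w.re * Real.cos t))
      = Real.log (2 / (‖z - w‖ + ‖z - (-(starRingEnd ℂ) w)‖)) := by
  set r := ‖z - w‖
  set s := ‖z - (-(starRingEnd ℂ) w)‖
  have hr : r ^ 2 = (z.re - w.re) ^ 2 + (z.im - w.im) ^ 2 := by
    simp only [r, Complex.sq_norm, Complex.normSq_apply, sub_re, sub_im]; ring
  have hs : s ^ 2 = (z.re + w.re) ^ 2 + (z.im - w.im) ^ 2 := by
    simp only [s, Complex.sq_norm, Complex.normSq_apply, sub_re, sub_im, neg_re, neg_im, conj_re,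
      conj_im]; ring
  have hkernel : ∀ t : ℝ, z.re ^ 2 + w.re ^ 2 + (z.im - w.im) ^ 2 - 2 * z.re * w.re * Real.cos t
      = ((r + s) / 2) ^ 2 + ((s - r) / 2) ^ 2
        - 2 * ((r + s) / 2) * ((s - r) / 2) * Real.cos t := fun t => by
    linear_combination (-(1 + Real.cos t) / 2) * hr + (-(1 - Real.cos t) / 2) * hs
  have hqp : |(s - r) / 2| ≤ |(r + s) / 2| := by
    rw [abs_of_nonneg (by positivity : 0 ≤ (r + s) / 2), abs_le]
    constructor <;> linarith [norm_nonneg (z - w), norm_nonneg (z - (-(starRingEnd ℂ) w))]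
  simp_rw [hkernel, average_log_inv_sqrt_sub_mul_cos hqp, ← Real.log_inv, inv_div]

theorem averaged_log_kernel_eq (z w : ℂ) (hz : 0 ≤ z.re) (hw : 0 ≤ w.re)
    (h : ¬(z = w ∧ z.re = 0)) :
    (1 / (2 * π)) * ∫ t in (0:ℝ)..(2 * π),
        Real.log (1 / Real.sqrt (z.re ^ 2 + w.re ^ 2 + (z.im - w.im) ^ 2
          - 2 * z.re * w.re * Real.cos t))
      = Real.log (2 / (‖z - w‖ + ‖z - (-(starRingEnd ℂ) w)‖)) :=
  averaged_log_kernel_eq_general z w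
end

section
/- Fix u ≥ 0 and real numbers y ≠ v. Then the function x ↦ K(x + iy, u + iv) = log(2/(|x+iy − (u+iv)| + |x+iy − (−u+iv)|)) is strictly decreasing on [0, ∞). -/
/-!
With `c = (y - v)² > 0`, `K (x + iy) (u + iv) = log (2 / f x)` where `f x = h (x - u) + h (x + u)`
and `h t = √(t² + c)`. The derivative `g t = t / √(t² + c)` of `h` is odd and strictly increasing,
so for `x > 0` we get `f' x = g (x + u) - g (u - x) > 0` because `u - x < x + u`.
-/

open Complex

noncomputable def K (z w : ℂ) : ℝ :=
  Real.log (2 / (‖z - w‖ + ‖z - (-(starRingEnd ℂ) w)‖))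

open Real Set

section SqrtSqAdd

variable {c : ℝ}

lemma hasDerivAt_sqrt_sq_add (hc : 0 < c) (t : ℝ) :
    HasDerivAt (fun t => √(t ^ 2 + c)) (t / √(t ^ 2 + c)) t := by
  have h := ((hasDerivAt_pow 2 t).add_const c).sqrt (by positivity)
  convert h using 1
  field_simp
  ring

lemma strictMonoOn_div_sqrt_sq_add (hc : 0 < c) :
    StrictMonoOn (fun t => t / √(t ^ 2 + c)) (Ici 0) := by
  intro s hs t ht hst
  simp only [mem_Ici] at hs ht
  rw [div_lt_div_iff₀ (by positivity) (by positivity)]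
  have hsq : s * √(t ^ 2 + c) = √(s ^ 2 * (t ^ 2 + c)) := by
    rw [sqrt_mul (sq_nonneg s), sqrt_sq hs]
  have htq : t * √(s ^ 2 + c) = √(t ^ 2 * (s ^ 2 + c)) := by
    rw [sqrt_mul (sq_nonneg t), sqrt_sq ht]
  rw [hsq, htq]
  refine sqrt_lt_sqrt (by positivity) ?_
  linarith [mul_lt_mul_of_pos_left (pow_lt_pow_left₀ hst hs two_ne_zero) hc]

lemma strictMono_div_sqrt_sq_add (hc : 0 < c) :
    StrictMono (fun t => t / √(t ^ 2 + c)) :=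
  strictMono_of_odd_strictMonoOn_nonneg (fun t => by simp [neg_div])
    (strictMonoOn_div_sqrt_sq_add hc)

lemma strictMonoOn_sqrt_sq_add_add_sqrt_sq_add (hc : 0 < c) (u : ℝ) :
    StrictMonoOn (fun x => √((x - u) ^ 2 + c) + √((x + u) ^ 2 + c)) (Ici 0) := by
  have hderiv (x : ℝ) : HasDerivAt (fun x => √((x - u) ^ 2 + c) + √((x + u) ^ 2 + c))
      ((x - u) / √((x - u) ^ 2 + c) + (x + u) / √((x + u) ^ 2 + c)) x :=
    ((hasDerivAt_sqrt_sq_add hc _).comp_sub_const x u).add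
      ((hasDerivAt_sqrt_sq_add hc _).comp_add_const x u)
  refine strictMonoOn_of_hasDerivWithinAt_pos (convex_Ici 0)
    (fun x _ => (hderiv x).continuousAt.continuousWithinAt)
    (fun x _ => (hderiv x).hasDerivWithinAt) fun x hx => ?_
  rw [interior_Ici, mem_Ioi] at hx
  have hlt := strictMono_div_sqrt_sq_add hc (show u - x < x + u by linarith)
  have hodd : (x - u) / √((x - u) ^ 2 + c) = -((u - x) / √((u - x) ^ 2 + c)) := by
    rw [← neg_sub, neg_sq, neg_div]
  simp only at hlt
  linarith

end SqrtSqAdd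

lemma K_mk_mk (x y u v : ℝ) :
    K ⟨x, y⟩ ⟨u, v⟩ =
      Real.log (2 / (√((x - u) ^ 2 + (y - v) ^ 2) + √((x + u) ^ 2 + (y - v) ^ 2))) := by
  simp only [K, norm_eq_sqrt_sq_add_sq, sub_neg_eq_add, sub_re, sub_im, add_re, add_im, conj_re,
    conj_im]
  ring_nf

theorem K_strictAntiOn_horizontal_general (u : ℝ) (y v : ℝ) (hyv : y ≠ v) :
    StrictAntiOn (fun x : ℝ => K (⟨x, y⟩ : ℂ) (⟨u, v⟩ : ℂ)) (Set.Ici 0) := by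
  have hc : 0 < (y - v) ^ 2 := pow_two_pos_of_ne_zero (sub_ne_zero.2 hyv)
  intro a ha b hb hab
  have hsum_pos (x : ℝ) : 0 < √((x - u) ^ 2 + (y - v) ^ 2) + √((x + u) ^ 2 + (y - v) ^ 2) := by
    positivity
  simp only [K_mk_mk]
  exact log_lt_log (div_pos two_pos (hsum_pos b)) <| div_lt_div_of_pos_left two_pos (hsum_pos a)
    (strictMonoOn_sqrt_sq_add_add_sqrt_sq_add hc u ha hb hab)

theorem K_strictAntiOn_horizontal (u : ℝ) (hu : 0 ≤ u) (y v : ℝ) (hyv : y ≠ v) :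
    StrictAntiOn (fun x : ℝ => K (⟨x, y⟩ : ℂ) (⟨u, v⟩ : ℂ)) (Set.Ici 0) :=
  K_strictAntiOn_horizontal_general u y v hyv
end

section
/- Let γ(t) = R + it for t ∈ [c,d] with R > 0. For s ≠ t in [c,d], K(γ(t), γ(s)) = log 2 − log(|s − t| + √(4R² + (s − t)²)), its derivative in t equals sgn(s − t)/√(4R² + (s−t)²), and its second derivative in t equals |s − t|/(4R² + (s − t)²)^{3/2}; in particular t ↦ K(γ(t), γ(s)) is strictly convex on [c, s] and on [s, d]. -/
/-! On the line `Re z = R` the reflection `w* = -conj w` of `γ s` is `-R + i s`, so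
`|γ t - γ s| = |s - t|` and `|γ t - (γ s)*| = √(4R² + (s - t)²)`, which turns the kernel into
`K (γ t) (γ s) = -log R - arsinh (|s - t| / 2R)`. This is smooth away from `t = s`, and its second
derivative `|s - t| / (4R² + (s - t)²)^{3/2}` is positive on the interiors of `[c, s]` and
`[s, d]`, which gives strict convexity there. -/

open Complex

open Filter Topology

theorem strictConvexOn_of_hasDerivAt2_pos {D : Set ℝ} (hD : Convex ℝ D) {f f' f'' : ℝ → ℝ}
    (hf : ContinuousOn f D) (hf' : ∀ x ∈ interior D, HasDerivAt f (f' x) x)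
    (hf'' : ∀ x ∈ interior D, HasDerivAt f' (f'' x) x) (hpos : ∀ x ∈ interior D, 0 < f'' x) :
    StrictConvexOn ℝ D f := by
  refine strictConvexOn_of_deriv2_pos hD hf fun x hx => ?_
  have hderiv : deriv f =ᶠ[𝓝 x] f' :=
    eventually_of_mem (isOpen_interior.mem_nhds hx) fun y hy => (hf' y hy).deriv
  rw [Function.iterate_succ_apply, Function.iterate_one, hderiv.deriv_eq, (hf'' x hx).deriv]
  exact hpos x hx

namespace Real

theorem sign_eq_coe_signType_sign (x : ℝ) : Real.sign x = (SignType.sign x : ℝ) := by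
  rcases lt_trichotomy x 0 with h | rfl | h
  · simp [sign_of_neg h, h]
  · simp [sign_zero]
  · simp [sign_of_pos h, h]

theorem sign_eventuallyEq {x : ℝ} (hx : x ≠ 0) : Real.sign =ᶠ[𝓝 x] fun _ => Real.sign x := by
  rcases hx.lt_or_gt with h | h
  · filter_upwards [Iio_mem_nhds h] with y hy
    rw [sign_of_neg hy, sign_of_neg h]
  · filter_upwards [Ioi_mem_nhds h] with y hy
    rw [sign_of_pos hy, sign_of_pos h]

theorem hasDerivAt_sign {x : ℝ} (hx : x ≠ 0) : HasDerivAt Real.sign 0 x :=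
  (hasDerivAt_const x _).congr_of_eventuallyEq (sign_eventuallyEq hx)

theorem sqrt_one_add_div_sq {r : ℝ} (hr : 0 < r) (x : ℝ) :
    √(1 + (x / r) ^ 2) = √(r ^ 2 + x ^ 2) / r := by
  rw [div_pow, one_add_div (by positivity), sqrt_div' _ (by positivity), sqrt_sq hr.le]

theorem log_add_sqrt_sq_add_sq {r : ℝ} (hr : 0 < r) (x : ℝ) :
    log (x + √(r ^ 2 + x ^ 2)) = log r + arsinh (x / r) := by
  rw [← log_exp (log r + arsinh (x / r)), exp_add, exp_log hr, exp_arsinh,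
    sqrt_one_add_div_sq hr]
  field_simp

theorem hasDerivAt_sign_div_sqrt_add_sq {a : ℝ} (ha : 0 < a) {u : ℝ} (hu : u ≠ 0) :
    HasDerivAt (fun v => Real.sign v / √(a + v ^ 2)) (-|u| / (a + u ^ 2) ^ ((3 : ℝ) / 2)) u := by
  have hq : 0 < a + u ^ 2 := by positivity
  have hrpow : HasDerivAt (fun v => (a + v ^ 2) ^ (-(1 / 2) : ℝ))
      (2 * u * (-(1 / 2)) * (a + u ^ 2) ^ (-(1 / 2) - 1 : ℝ)) u := by
    simpa using ((hasDerivAt_pow 2 u).const_add a).rpow_const (p := -(1 / 2)) (Or.inl hq.ne')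
  have hfun : (fun v => Real.sign v / √(a + v ^ 2))
      = fun v => Real.sign v * (a + v ^ 2) ^ (-(1 / 2) : ℝ) := by
    ext v
    rw [sqrt_eq_rpow, rpow_neg (by positivity), div_eq_mul_inv]
  rw [hfun]
  refine ((hasDerivAt_sign hu).mul hrpow).congr_deriv ?_
  rw [← sign_mul_self, ← sign_eq_coe_signType_sign, show (-(1 / 2) - 1 : ℝ) = -(3 / 2) by norm_num,
    rpow_neg hq.le (3 / 2)]
  ring

end Real

open Real

theorem K_vertical_eq_log {R : ℝ} (hR : 0 < R) (s t : ℝ) :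
    K ⟨R, t⟩ ⟨R, s⟩ = Real.log 2 - Real.log (|s - t| + √(4 * R ^ 2 + (s - t) ^ 2)) := by
  have hdist : ‖(⟨R, t⟩ - ⟨R, s⟩ : ℂ)‖ = |s - t| := by
    rw [abs_sub_comm, ← sqrt_sq_eq_abs]
    simp [Complex.norm_def, Complex.normSq_apply, sq]
  have hdist_reflected : ‖(⟨R, t⟩ - -(starRingEnd ℂ) ⟨R, s⟩ : ℂ)‖ = √(4 * R ^ 2 + (s - t) ^ 2) := by
    simp [Complex.norm_def, Complex.normSq_apply]
    ring_nf
  have hpos : 0 < |s - t| + √(4 * R ^ 2 + (s - t) ^ 2) := by positivity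
  rw [K, hdist, hdist_reflected, log_div two_ne_zero hpos.ne']

theorem K_vertical_eq_arsinh {R : ℝ} (hR : 0 < R) (s t : ℝ) :
    K ⟨R, t⟩ ⟨R, s⟩ = -Real.log R - arsinh (|s - t| / (2 * R)) := by
  rw [K_vertical_eq_log hR, ← sq_abs (s - t), show 4 * R ^ 2 = (2 * R) ^ 2 by ring,
    log_add_sqrt_sq_add_sq (by positivity), log_mul two_ne_zero hR.ne']
  ring

theorem hasDerivAt_K_vertical {R : ℝ} (hR : 0 < R) {s t : ℝ} (hts : t ≠ s) :
    HasDerivAt (fun τ => K ⟨R, τ⟩ ⟨R, s⟩) (Real.sign (s - t) / √(4 * R ^ 2 + (s - t) ^ 2)) t := by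
  have habs : HasDerivAt (fun τ => |s - τ|) (-(SignType.sign (s - t) : ℝ)) t :=
    (hasDerivAt_abs (sub_ne_zero.2 hts.symm)).comp_const_sub s t
  simp_rw [K_vertical_eq_arsinh hR]
  refine (((habs.div_const (2 * R)).arsinh).const_sub (-Real.log R)).congr_deriv ?_
  rw [sqrt_one_add_div_sq (by positivity), sq_abs, ← sign_eq_coe_signType_sign,
    show (2 * R) ^ 2 = 4 * R ^ 2 by ring, smul_eq_mul]
  field_simp

theorem hasDerivAt_sign_sub_div_sqrt {a : ℝ} (ha : 0 < a) {s t : ℝ} (hts : t ≠ s) :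
    HasDerivAt (fun τ => Real.sign (s - τ) / √(a + (s - τ) ^ 2))
      (|s - t| / (a + (s - t) ^ 2) ^ ((3 : ℝ) / 2)) t := by
  simpa [neg_div] using
    (hasDerivAt_sign_div_sqrt_add_sq ha (sub_ne_zero.2 hts.symm)).comp_const_sub s t

theorem strictConvexOn_K_vertical {R : ℝ} (hR : 0 < R) {s : ℝ} {D : Set ℝ}
    (hD : Convex ℝ D) (hs : s ∉ interior D) :
    StrictConvexOn ℝ D (fun t => K ⟨R, t⟩ ⟨R, s⟩) := by
  have hne : ∀ t ∈ interior D, t ≠ s := fun t ht => ne_of_mem_of_not_mem ht hs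
  have hcont : Continuous (fun t : ℝ => K ⟨R, t⟩ ⟨R, s⟩) := by
    rw [funext fun t => K_vertical_eq_arsinh hR s t]
    exact continuous_const.sub ((continuous_const.sub continuous_id).abs.div_const _).arsinh
  refine strictConvexOn_of_hasDerivAt2_pos hD hcont.continuousOn
    (fun t ht => hasDerivAt_K_vertical hR (hne t ht))
    (fun t ht => hasDerivAt_sign_sub_div_sqrt (by positivity) (hne t ht)) fun t ht => ?_
  have : 0 < |s - t| := abs_pos.2 (sub_ne_zero.2 (hne t ht).symm)
  positivity

theorem K_vertical_segment_general (R c d : ℝ) (hR : 0 < R)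
    (γ : ℝ → ℂ) (hγ : ∀ t, γ t = ⟨R, t⟩)
    (s : ℝ) :
    (∀ t ∈ Set.Icc c d, t ≠ s →
        K (γ t) (γ s) = Real.log 2
          - Real.log (|s - t| + Real.sqrt (4 * R ^ 2 + (s - t) ^ 2))) ∧
    (∀ t ∈ Set.Icc c d, t ≠ s →
        HasDerivAt (fun τ => K (γ τ) (γ s))
          (Real.sign (s - t) / Real.sqrt (4 * R ^ 2 + (s - t) ^ 2)) t) ∧
    (∀ t ∈ Set.Icc c d, t ≠ s →
        HasDerivAt (fun τ => Real.sign (s - τ) / Real.sqrt (4 * R ^ 2 + (s - τ) ^ 2))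
          (|s - t| / (4 * R ^ 2 + (s - t) ^ 2) ^ ((3:ℝ)/2)) t) ∧
    StrictConvexOn ℝ (Set.Icc c s) (fun t => K (γ t) (γ s)) ∧
    StrictConvexOn ℝ (Set.Icc s d) (fun t => K (γ t) (γ s)) := by
  obtain rfl : γ = fun t => ⟨R, t⟩ := funext hγ
  exact ⟨fun t _ _ => K_vertical_eq_log hR s t,
    fun t _ hts => hasDerivAt_K_vertical hR hts,
    fun t _ hts => hasDerivAt_sign_sub_div_sqrt (by positivity) hts,
    strictConvexOn_K_vertical hR (convex_Icc c s) (by simp),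
    strictConvexOn_K_vertical hR (convex_Icc s d) (by simp)⟩

theorem K_vertical_segment (R c d : ℝ) (hR : 0 < R) (hcd : c ≤ d)
    (γ : ℝ → ℂ) (hγ : ∀ t, γ t = ⟨R, t⟩)
    (s : ℝ) (hs : s ∈ Set.Icc c d) :
    (∀ t ∈ Set.Icc c d, t ≠ s →
        K (γ t) (γ s) = Real.log 2
          - Real.log (|s - t| + Real.sqrt (4 * R ^ 2 + (s - t) ^ 2))) ∧
    (∀ t ∈ Set.Icc c d, t ≠ s →
        HasDerivAt (fun τ => K (γ τ) (γ s))
          (Real.sign (s - t) / Real.sqrt (4 * R ^ 2 + (s - t) ^ 2)) t) ∧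
    (∀ t ∈ Set.Icc c d, t ≠ s →
        HasDerivAt (fun τ => Real.sign (s - τ) / Real.sqrt (4 * R ^ 2 + (s - τ) ^ 2))
          (|s - t| / (4 * R ^ 2 + (s - t) ^ 2) ^ ((3:ℝ)/2)) t) ∧
    StrictConvexOn ℝ (Set.Icc c s) (fun t => K (γ t) (γ s)) ∧
    StrictConvexOn ℝ (Set.Icc s d) (fun t => K (γ t) (γ s)) :=
  K_vertical_segment_general R c d hR γ hγ s
end

section
/- Let γ(t) = R + e^{it}, t ∈ [−π/2, π/2], R > 0, and w = γ(s)* = −conj(γ(s)). Then N(t)·u_w(t) = −(2R cos t + cos(s+t) + 1)/√((2R + cos s + cos t)² + (sin s − sin t)²) and κ(t) + (N(t)·u_w(t))/r_w(t) = 1/2 + 2R(R + cos s)/((2R + cos s + cos t)² + (sin s − sin t)²); in particular both N(t)·u_w(t) < 0 and κ(t) + (N(t)·u_w(t))/r_w(t) > 0 hold for all s, t ∈ [−π/2, π/2] with s ≠ t. -/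
open Complex Real

/-- Real dot product on ℂ ≅ ℝ². -/
noncomputable def dotC (z w : ℂ) : ℝ := (z * (starRingEnd ℂ) w).re

/-! The chord from the reflected point `w = -conj (R + e^{is})` to `R + e^{it}` is
`(2R + cos s + cos t, sin t - sin s)`. Its dot product with the inward normal `-e^{it}` is `-P`,
`P = 2R cos t + cos (s + t) + 1`, and its squared length is `2P + 4R(R + cos s)`, so
`1 - P / |chord|² = 1/2 + 2R(R + cos s) / |chord|²`. Both signs then come down to `P > 0`,
which holds because `|s + t| < π` unless `s = t = ±π/2`. -/

lemma dotC_div_ofReal (z w : ℂ) (r : ℝ) : dotC z (w / r) = dotC z w / r := by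
  rw [dotC, dotC, map_div₀, conj_ofReal, ← mul_div_assoc, div_ofReal_re]

lemma dotC_neg_exp_mul_I_mk (t a b : ℝ) :
    dotC (-exp (t * I)) ⟨a, b⟩ = -(Real.cos t * a + Real.sin t * b) := by
  simp [dotC, exp_mul_I, cos_ofReal_re, sin_ofReal_re]
  ring

lemma circle_sub_reflection (R s t : ℝ) :
    (R : ℂ) + exp (t * I) - -(starRingEnd ℂ) ((R : ℂ) + exp (s * I))
      = ⟨2 * R + Real.cos s + Real.cos t, Real.sin t - Real.sin s⟩ := by
  apply Complex.ext
  · simp [exp_mul_I, cos_ofReal_re, sin_ofReal_re]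
    ring
  · simp [exp_mul_I, cos_ofReal_im, sin_ofReal_im, sin_ofReal_re]

lemma chord_sq_eq (R s t : ℝ) :
    (2 * R + Real.cos s + Real.cos t) ^ 2 + (Real.sin s - Real.sin t) ^ 2
      = 2 * (2 * R * Real.cos t + Real.cos (s + t) + 1) + 4 * R * (R + Real.cos s) := by
  rw [Real.cos_add]
  linear_combination Real.sin_sq_add_cos_sq s + Real.sin_sq_add_cos_sq t

lemma abs_add_lt_pi_of_mem_Icc {s t : ℝ} (hs : s ∈ Set.Icc (-(π / 2)) (π / 2))
    (ht : t ∈ Set.Icc (-(π / 2)) (π / 2)) (hst : s ≠ t) : |s + t| < π := by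
  rw [abs_lt]
  constructor
  · by_contra! h
    exact hst (by linarith [hs.1, ht.1])
  · by_contra! h
    exact hst (by linarith [hs.2, ht.2])

lemma neg_one_lt_cos_of_abs_lt_pi {x : ℝ} (hx : |x| < π) : -1 < Real.cos x := by
  rw [← Real.cos_pi, ← Real.cos_abs x]
  exact cos_lt_cos_of_nonneg_of_le_pi (abs_nonneg x) le_rfl hx

lemma normal_dot_numerator_pos {R s t : ℝ} (hR : 0 ≤ R) (hs : s ∈ Set.Icc (-(π / 2)) (π / 2))
    (ht : t ∈ Set.Icc (-(π / 2)) (π / 2)) (hst : s ≠ t) :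
    0 < 2 * R * Real.cos t + Real.cos (s + t) + 1 := by
  have hcos_add := neg_one_lt_cos_of_abs_lt_pi (abs_add_lt_pi_of_mem_Icc hs ht hst)
  have hR_cos_t := mul_nonneg hR (cos_nonneg_of_mem_Icc ht)
  linarith

theorem circle_normal_dot_reflected (R : ℝ) (hR : 0 < R)
    (s t : ℝ) (hs : s ∈ Set.Icc (-(π/2)) (π/2)) (ht : t ∈ Set.Icc (-(π/2)) (π/2))
    (hst : s ≠ t) :
    let γ : ℝ → ℂ := fun τ => (R : ℂ) + Complex.exp (τ * Complex.I)
    let N : ℂ := -Complex.exp (t * Complex.I)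
    let w : ℂ := -(starRingEnd ℂ) (γ s)
    let u : ℂ := (γ t - w) / (‖γ t - w‖ : ℂ)
    dotC N u = -(2 * R * Real.cos t + Real.cos (s + t) + 1) /
        Real.sqrt ((2 * R + Real.cos s + Real.cos t) ^ 2 + (Real.sin s - Real.sin t) ^ 2) ∧
    1 + dotC N u / ‖γ t - w‖
      = 1 / 2 + 2 * R * (R + Real.cos s) /
          ((2 * R + Real.cos s + Real.cos t) ^ 2 + (Real.sin s - Real.sin t) ^ 2) ∧
    dotC N u < 0 ∧
    0 < 1 + dotC N u / ‖γ t - w‖ := by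
  intro γ N w u
  set P := 2 * R * Real.cos t + Real.cos (s + t) + 1
  set D := (2 * R + Real.cos s + Real.cos t) ^ 2 + (Real.sin s - Real.sin t) ^ 2
  have hchord : γ t - w = ⟨2 * R + Real.cos s + Real.cos t, Real.sin t - Real.sin s⟩ :=
    circle_sub_reflection R s t
  have hnorm : ‖γ t - w‖ = √D := by
    rw [hchord, norm_def, normSq_mk]
    congr 1
    ring
  have hdot : dotC N u = -P / √D := by
    rw [show u = (γ t - w) / (‖γ t - w‖ : ℝ) from rfl, dotC_div_ofReal, hnorm, hchord,
      dotC_neg_exp_mul_I_mk]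
    congr 1
    simp only [P, Real.cos_add]
    linear_combination -Real.sin_sq_add_cos_sq t
  have hP : 0 < P := normal_dot_numerator_pos hR.le hs ht hst
  have hcos_s : 0 ≤ Real.cos s := cos_nonneg_of_mem_Icc hs
  have hD : D = 2 * P + 4 * R * (R + Real.cos s) := chord_sq_eq R s t
  have hD_pos : 0 < D := by rw [hD]; positivity
  have hcurv : 1 + dotC N u / ‖γ t - w‖ = 1 / 2 + 2 * R * (R + Real.cos s) / D := by
    rw [hdot, hnorm, div_div, mul_self_sqrt hD_pos.le]
    field_simp
    linear_combination hD
  refine ⟨hdot, hcurv, ?_, ?_⟩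
  · rw [hdot]
    exact div_neg_of_neg_of_pos (neg_neg_of_pos hP) (sqrt_pos.mpr hD_pos)
  · rw [hcurv]
    positivity
end

section
/- For z, w in a fixed compact subset of the open right half-plane, the rescaled kernel K_R(z,w) := 2R(K(R+z, R+w) + log R) converges uniformly as R → ∞ to K_∞(z,w) := −(Re(z − w*) + |z − w|), where w* = −conj(w); in fact K_R(z,w) = K_∞(z,w) + O(1/R). -/
/-!
Translating both points by `R` gives `K (R + z) (R + w) + log R = -log ((a + b) / (2R))` with
`a = ‖z - w‖`, `b = ‖2R + u‖` and `u = z + conj w`. Since `b = 2R + Re u + O(‖u‖² / R)`, the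
quotient is `1 + x / (2R)` with `x = a + Re u + O(1 / R)` bounded, and then
`2R log (1 + x / (2R)) = x + O(x² / R)`.
-/

open Complex

noncomputable def KR (R : ℝ) (z w : ℂ) : ℝ :=
  2 * R * (K ((R : ℂ) + z) ((R : ℂ) + w) + Real.log R)

noncomputable def Kinf (z w : ℂ) : ℝ :=
  -((z - (-(starRingEnd ℂ) w)).re + ‖z - w‖)

open ComplexConjugate

lemma Real.abs_log_one_add_sub_self_le {t : ℝ} (ht : |t| ≤ 1 / 2) :
    |Real.log (1 + t) - t| ≤ 2 * t ^ 2 := by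
  have h := Real.abs_log_sub_add_sum_range_le (x := -t) (by rw [abs_neg]; linarith) 1
  simp only [Finset.range_one, Finset.sum_singleton, pow_one, abs_neg, sub_neg_eq_add,
    CharP.cast_eq_zero, zero_add, div_one, neg_add_eq_sub] at h
  calc |Real.log (1 + t) - t| ≤ |t| ^ 2 / (1 - |t|) := by simpa [add_comm] using h
    _ ≤ 2 * t ^ 2 := by
      rw [div_le_iff₀ (by linarith), sq_abs]
      nlinarith [sq_nonneg t, abs_nonneg t]

lemma abs_two_mul_log_one_add_div_sub_le {R x : ℝ} (hR : 0 < R) (hx : |x| ≤ R) :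
    |2 * R * Real.log (1 + x / (2 * R)) - x| ≤ x ^ 2 / R := by
  have h2R : 0 < 2 * R := by linarith
  have ht : |x / (2 * R)| ≤ 1 / 2 := by
    rw [abs_div, abs_of_pos h2R, div_le_iff₀ h2R]
    linarith
  calc |2 * R * Real.log (1 + x / (2 * R)) - x|
      = |2 * R| * |Real.log (1 + x / (2 * R)) - x / (2 * R)| := by
        rw [← abs_mul, mul_sub, mul_div_cancel₀ _ h2R.ne']
    _ ≤ 2 * R * (2 * (x / (2 * R)) ^ 2) := by
        rw [abs_of_pos h2R]
        gcongr
        exact Real.abs_log_one_add_sub_self_le ht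
    _ = x ^ 2 / R := by field_simp

lemma abs_norm_ofReal_add_sub_le {r : ℝ} (hr : 0 < r) (u : ℂ) :
    |‖(r : ℂ) + u‖ - (r + u.re)| ≤ 2 * ‖u‖ ^ 2 / r := by
  set b := ‖(r : ℂ) + u‖
  have hb : |r - b| ≤ ‖u‖ := by
    simpa [b, Complex.norm_real, abs_of_pos hr] using abs_norm_sub_norm_le (r : ℂ) ((r : ℂ) + u)
  have hb_sq : b ^ 2 = r ^ 2 + 2 * r * u.re + ‖u‖ ^ 2 := by
    simp only [b, Complex.sq_norm, Complex.normSq_apply, add_re, add_im, ofReal_re, ofReal_im]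
    ring
  -- multiplying by `b + r` removes the square root
  have hmul : (b - (r + u.re)) * (b + r) = ‖u‖ ^ 2 + u.re * (r - b) := by
    linear_combination hb_sq
  have hbound : |b - (r + u.re)| * (b + r) ≤ 2 * ‖u‖ ^ 2 := by
    rw [← abs_of_nonneg (by positivity : 0 ≤ b + r), ← abs_mul, hmul]
    calc |‖u‖ ^ 2 + u.re * (r - b)| ≤ ‖u‖ ^ 2 + ‖u‖ * ‖u‖ := by
          refine (abs_add_le _ _).trans ?_
          rw [abs_mul, abs_of_nonneg (by positivity)]
          gcongr
          exact Complex.abs_re_le_norm u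
      _ = 2 * ‖u‖ ^ 2 := by ring
  rw [le_div_iff₀ hr]
  nlinarith [abs_nonneg (b - (r + u.re)), norm_nonneg ((r : ℂ) + u)]

lemma K_ofReal_add (R : ℝ) (z w : ℂ) :
    K ((R : ℂ) + z) ((R : ℂ) + w) =
      Real.log (2 / (‖z - w‖ + ‖((2 * R : ℝ) : ℂ) + (z + conj w)‖)) := by
  rw [K]
  congr 4
  · ring
  · simp only [map_add, conj_ofReal, ofReal_mul, ofReal_ofNat]
    ring

lemma Kinf_eq (z w : ℂ) : Kinf z w = -((z + conj w).re + ‖z - w‖) := by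
  rw [Kinf, sub_neg_eq_add]

lemma KR_eq_neg_mul_log {R : ℝ} (hR : 0 < R) (z w : ℂ)
    (hpos : 0 < ‖z - w‖ + ‖((2 * R : ℝ) : ℂ) + (z + conj w)‖) :
    KR R z w = -(2 * R * Real.log ((‖z - w‖ + ‖((2 * R : ℝ) : ℂ) + (z + conj w)‖) / (2 * R))) := by
  have hinv : 2 / (‖z - w‖ + ‖((2 * R : ℝ) : ℂ) + (z + conj w)‖) * R =
      ((‖z - w‖ + ‖((2 * R : ℝ) : ℂ) + (z + conj w)‖) / (2 * R))⁻¹ := by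
    field_simp
  rw [KR, K_ofReal_add, ← Real.log_mul (by positivity) hR.ne', hinv, Real.log_inv]
  ring

lemma abs_KR_sub_Kinf_le {R : ℝ} (hR : 0 < R) (z w : ℂ) (hRzw : 2 * (‖z‖ + ‖w‖) ≤ R) :
    |KR R z w - Kinf z w| ≤ 5 * (‖z‖ + ‖w‖) ^ 2 / R := by
  set M := ‖z‖ + ‖w‖
  set u := z + conj w
  set a := ‖z - w‖
  set b := ‖((2 * R : ℝ) : ℂ) + u‖
  set x := a + b - 2 * R
  have hu : ‖u‖ ≤ M := (norm_add_le _ _).trans_eq (by rw [Complex.norm_conj])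
  have ha : a ≤ M := norm_sub_le z w
  have hb : |b - 2 * R| ≤ ‖u‖ := by
    simpa [b, Complex.norm_real, abs_of_pos hR] using
      abs_norm_sub_norm_le (((2 * R : ℝ) : ℂ) + u) ((2 * R : ℝ) : ℂ)
  have hx : |x| ≤ 2 * M := by
    calc |x| = |a + (b - 2 * R)| := by rw [show x = a + (b - 2 * R) by ring]
      _ ≤ |a| + |b - 2 * R| := abs_add_le _ _
      _ ≤ 2 * M := by rw [abs_of_nonneg (norm_nonneg _)]; linarith
  have hab : (a + b) / (2 * R) = 1 + x / (2 * R) := by field_simp; ring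
  have hab_pos : 0 < a + b := by have := (abs_le.mp hx).1; linarith
  have hKR : KR R z w = -(2 * R * Real.log (1 + x / (2 * R))) := by
    rw [KR_eq_neg_mul_log hR z w hab_pos, hab]
  have he := abs_norm_ofReal_add_sub_le (by linarith : 0 < 2 * R) u
  have hdecomp : KR R z w - Kinf z w =
      -(2 * R * Real.log (1 + x / (2 * R)) - x) - (b - (2 * R + u.re)) := by
    rw [hKR, Kinf_eq]; ring
  calc |KR R z w - Kinf z w|
      ≤ |2 * R * Real.log (1 + x / (2 * R)) - x| + |b - (2 * R + u.re)| := by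
        rw [hdecomp, ← abs_neg (2 * R * _ - x)]; exact abs_sub _ _
    _ ≤ x ^ 2 / R + 2 * ‖u‖ ^ 2 / (2 * R) :=
        add_le_add (abs_two_mul_log_one_add_div_sub_le hR (by linarith)) he
    _ ≤ (2 * M) ^ 2 / R + 2 * M ^ 2 / (2 * R) := by
        have hx2 : x ^ 2 ≤ (2 * M) ^ 2 := sq_le_sq' (abs_le.mp hx).1 (abs_le.mp hx).2
        have hu2 : ‖u‖ ^ 2 ≤ M ^ 2 := pow_le_pow_left₀ (norm_nonneg u) hu 2
        gcongr
    _ = 5 * M ^ 2 / R := by field_simp; ring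

theorem KR_tendsto_Kinf_general (S : Set ℂ) (hS : IsCompact S) :
    ∃ C R₀ : ℝ, 0 < R₀ ∧ ∀ R ≥ R₀, ∀ z ∈ S, ∀ w ∈ S,
      |KR R z w - Kinf z w| ≤ C / R := by
  obtain ⟨M, hM0, hM⟩ := hS.isBounded.exists_pos_norm_le
  refine ⟨5 * (2 * M) ^ 2, 4 * M, by positivity, fun R hR z hz w hw => ?_⟩
  have hR0 : 0 < R := by linarith
  have hzw : ‖z‖ + ‖w‖ ≤ 2 * M := by linarith [hM z hz, hM w hw]
  calc |KR R z w - Kinf z w| ≤ 5 * (‖z‖ + ‖w‖) ^ 2 / R :=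
        abs_KR_sub_Kinf_le hR0 z w (by linarith)
    _ ≤ 5 * (2 * M) ^ 2 / R := by gcongr

theorem KR_tendsto_Kinf (S : Set ℂ) (hS : IsCompact S) (hSpos : ∀ z ∈ S, 0 < z.re) :
    ∃ C R₀ : ℝ, 0 < R₀ ∧ ∀ R ≥ R₀, ∀ z ∈ S, ∀ w ∈ S,
      |KR R z w - Kinf z w| ≤ C / R :=
  KR_tendsto_Kinf_general S hS
end
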